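/- arXiv:1903.00143 — 2 statements merged into one kernel-verified Lean document; each statement's English description precedes it below -/
import Mathlib

section
/- Let P⁺ and P⁻ be two disjoint finite sets of points in the real plane ℝ². Then there exists a real polynomial f in two variables such that f(x,y) > 0 for every point (x,y) ∈ P⁺ and f(x,y) < 0 for every point (x,y) ∈ P⁻. Moreover, f can be chosen with total degree at most |P⁺| + |P⁻|. -/
open MvPolynomial Finset

/-- A direction `a` making the projection `p ↦ p 0 + a * p 1` injective on a finite set. -/
lemma exists_generic_direction (s : Finset (Fin 2 → ℝ)) :
    ∃ a : ℝ, Set.InjOn (fun p : Fin 2 → ℝ => p 0 + a * p 1) s := by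
  classical
  set bad : Finset ℝ := ((s ×ˢ s).filter fun pq => pq.1 1 ≠ pq.2 1).image
    (fun pq => (pq.2 0 - pq.1 0) / (pq.1 1 - pq.2 1)) with hbad
  obtain ⟨a, ha⟩ := Infinite.exists_notMem_finset bad
  refine ⟨a, fun p hp q hq h => ?_⟩
  simp only at h
  by_cases h1 : p 1 = q 1
  · have h0 : p 0 = q 0 := by
      rw [h1] at h; linarith
    funext i
    fin_cases i <;> assumption
  · exfalso
    apply ha
    rw [hbad]
    refine Finset.mem_image.mpr ⟨(p, q), ?_, ?_⟩
    · exact Finset.mem_filter.mpr ⟨Finset.mem_product.mpr ⟨hp, hq⟩, h1⟩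
    · show (q 0 - p 0) / (p 1 - q 1) = a
      rw [div_eq_iff (sub_ne_zero.mpr h1)]
      ring_nf
      linarith
  
/-- Lemma 3 ('partition_to_curve'): given disjoint finite sets of plane points
`Pp` and `Pm`, there is a real bivariate polynomial `f` of total degree at most
`|Pp| + |Pm|` that is positive on `Pp` and negative on `Pm`. -/
theorem partition_to_curve (Pp Pm : Finset (Fin 2 → ℝ)) (hdisj : Disjoint Pp Pm) :
    ∃ f : MvPolynomial (Fin 2) ℝ,
      f.totalDegree ≤ Pp.card + Pm.card ∧
      (∀ p ∈ Pp, 0 < MvPolynomial.eval p f) ∧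
      (∀ q ∈ Pm, MvPolynomial.eval q f < 0) := by
  classical
  set s : Finset (Fin 2 → ℝ) := Pp ∪ Pm with hs
  obtain ⟨a, ha⟩ := exists_generic_direction s
  set v : (Fin 2 → ℝ) → ℝ := fun p => p 0 + a * p 1 with hv
  set r : (Fin 2 → ℝ) → ℝ := fun p => if p ∈ Pp then 1 else -1 with hr
  set g : Polynomial ℝ := Lagrange.interpolate s v r with hg
  have hgdeg : g.natDegree ≤ s.card := by
    have := Lagrange.degree_interpolate_lt (r := r) ha
    exact Polynomial.natDegree_le_iff_degree_le.mpr (le_of_lt (by exact_mod_cast this))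
  set L : MvPolynomial (Fin 2) ℝ := X 0 + C a * X 1 with hL
  have hLdeg : L.totalDegree ≤ 1 := by
    refine (totalDegree_add _ _).trans (max_le ?_ ?_)
    · simp [totalDegree_X]
    · exact (totalDegree_mul _ _).trans (by simp [totalDegree_X])
  refine ⟨Polynomial.aeval L g, ?_, ?_, ?_⟩
  · rw [Polynomial.aeval_eq_sum_range]
    refine (totalDegree_finset_sum _ _).trans ?_
    refine Finset.sup_le fun i hi => ?_
    refine (totalDegree_smul_le _ _).trans ?_
    refine (totalDegree_pow _ _).trans ?_
    have : i ≤ s.card := by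
      have := Finset.mem_range.mp hi
      omega
    calc i * L.totalDegree ≤ i * 1 := Nat.mul_le_mul_left _ hLdeg
      _ ≤ Pp.card + Pm.card := by
        simpa using this.trans ((Finset.card_union_le Pp Pm))
  · intro p hp
    have hmem : p ∈ s := Finset.mem_union_left _ hp
    have heval : MvPolynomial.eval p (Polynomial.aeval L g) = Polynomial.eval (MvPolynomial.eval p L) g := by
      have hc : ((MvPolynomial.eval p).comp (algebraMap ℝ (MvPolynomial (Fin 2) ℝ))) = RingHom.id ℝ := by
        ext x; simp [MvPolynomial.algebraMap_eq]
      rw [Polynomial.aeval_def, Polynomial.hom_eval₂, hc]; rfl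
    rw [heval]
    have hLe : MvPolynomial.eval p L = v p := by simp [hL, hv]
    rw [hLe, hg, Lagrange.eval_interpolate_at_node r ha hmem, hr]
    simp [hp]
  · intro q hq
    have hmem : q ∈ s := Finset.mem_union_right _ hq
    have heval : MvPolynomial.eval q (Polynomial.aeval L g) = Polynomial.eval (MvPolynomial.eval q L) g := by
      have hc : ((MvPolynomial.eval q).comp (algebraMap ℝ (MvPolynomial (Fin 2) ℝ))) = RingHom.id ℝ := by
        ext x; simp [MvPolynomial.algebraMap_eq]
      rw [Polynomial.aeval_def, Polynomial.hom_eval₂, hc]; rfl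
    rw [heval]
    have hLe : MvPolynomial.eval q L = v q := by simp [hL, hv]
    have hnot : q ∉ Pp := fun h => (Finset.disjoint_left.mp hdisj h) hq
    rw [hLe, hg, Lagrange.eval_interpolate_at_node r ha hmem, hr]
    simp [hnot]
end

section
/- Let p₁, p₂, v₁, v₂ be vectors in the Euclidean plane with v₁ ≠ v₂, let d ∈ ℝ, and for τ ∈ ℝ define D(τ) = ‖(p₁ + τ • v₁) − (p₂ + τ • v₂)‖. Then there exist real numbers a and b such that {τ ∈ ℝ : D(τ) < d} = (a, b) (the open interval Ioo a b, which is empty when a ≥ b); consequently the feasible set {τ ∈ ℝ : D(τ) ≥ d} is the complement of a bounded open interval. -/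
/-!
The gate width is the norm of an affine function of `τ`, hence continuous and convex, and it is
coercive because the relative velocity `v₁ - v₂` is nonzero. Its strict sublevel set is therefore
an open, bounded, convex subset of `ℝ`, and such a set is an open interval.
-/

open Set

section IntervalOfOpen

variable {α : Type*} [ConditionallyCompleteLinearOrder α] [TopologicalSpace α] [OrderTopology α]
  [DenselyOrdered α] [NoMinOrder α] [NoMaxOrder α]

theorem IsOpen.eq_Ioo_csInf_csSup {s : Set α} (hs : IsOpen s) (hc : IsConnected s)
    (hb : BddBelow s) (ha : BddAbove s) : s = Ioo (sInf s) (sSup s) :=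
  (hc.Ioo_csInf_csSup_subset hb ha).antisymm' <| by
    simpa only [hs.interior_eq, interior_Icc] using interior_mono (subset_Icc_csInf_csSup hb ha)

theorem IsOpen.exists_eq_Ioo_of_isPreconnected [Nonempty α] {s : Set α} (hs : IsOpen s)
    (hc : IsPreconnected s) (hb : BddBelow s) (ha : BddAbove s) : ∃ a b : α, s = Ioo a b := by
  rcases s.eq_empty_or_nonempty with rfl | hne
  · obtain ⟨a⟩ := ‹Nonempty α›
    exact ⟨a, a, (Ioo_self a).symm⟩
  · exact ⟨_, _, hs.eq_Ioo_csInf_csSup ⟨hne, hc⟩ hb ha⟩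

end IntervalOfOpen

section NormAlongLine

variable {E : Type*} [NormedAddCommGroup E] [NormedSpace ℝ E] (c q : E) (d : ℝ)

theorem isOpen_setOf_norm_add_smul_lt : IsOpen {τ : ℝ | ‖c + τ • q‖ < d} :=
  isOpen_lt (by fun_prop) continuous_const

theorem convex_setOf_norm_add_smul_lt : Convex ℝ {τ : ℝ | ‖c + τ • q‖ < d} := by
  simpa [AffineMap.lineMap_apply_module', add_comm] using
    (convexOn_univ_norm.comp_affineMap (AffineMap.lineMap c (c + q))).convex_lt d

theorem abs_le_of_norm_add_smul_le {q : E} (hq : q ≠ 0) {τ : ℝ} (hτ : ‖c + τ • q‖ ≤ d) :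
    |τ| ≤ (d + ‖c‖) / ‖q‖ := by
  rw [le_div_iff₀ (norm_pos_iff.2 hq), ← Real.norm_eq_abs, ← norm_smul]
  calc ‖τ • q‖ = ‖(c + τ • q) - c‖ := by rw [add_sub_cancel_left]
    _ ≤ ‖c + τ • q‖ + ‖c‖ := norm_sub_le _ _
    _ ≤ d + ‖c‖ := by linarith

theorem isBounded_setOf_norm_add_smul_lt {q : E} (hq : q ≠ 0) :
    Bornology.IsBounded {τ : ℝ | ‖c + τ • q‖ < d} :=
  (Metric.isBounded_Icc (-((d + ‖c‖) / ‖q‖)) ((d + ‖c‖) / ‖q‖)).subset fun _ hτ =>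
    abs_le.1 (abs_le_of_norm_add_smul_le c d hq (le_of_lt hτ))

end NormAlongLine

/-- Under the linear pedestrian model with nonzero relative velocity, the set
of times when the gate is strictly narrower than the threshold `d` is a single
(possibly empty) bounded open interval, so the feasible set
`{τ : D(τ) ≥ d}` is the complement of that interval. -/
theorem gate_infeasible_times_is_open_interval
    (p₁ p₂ v₁ v₂ : EuclideanSpace ℝ (Fin 2)) (hv : v₁ ≠ v₂) (d : ℝ) :
    ∃ a b : ℝ,
      {τ : ℝ | ‖(p₁ + τ • v₁) - (p₂ + τ • v₂)‖ < d} = Set.Ioo a b ∧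
      {τ : ℝ | d ≤ ‖(p₁ + τ • v₁) - (p₂ + τ • v₂)‖} = (Set.Ioo a b)ᶜ := by
  have hgap (τ : ℝ) : (p₁ + τ • v₁) - (p₂ + τ • v₂) = (p₁ - p₂) + τ • (v₁ - v₂) := by
    rw [smul_sub]; abel
  have hq : v₁ - v₂ ≠ 0 := sub_ne_zero.2 hv
  have hbdd := isBounded_setOf_norm_add_smul_lt (p₁ - p₂) d hq
  obtain ⟨a, b, hab⟩ :=
    (isOpen_setOf_norm_add_smul_lt (p₁ - p₂) (v₁ - v₂) d).exists_eq_Ioo_of_isPreconnected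
      (convex_setOf_norm_add_smul_lt (p₁ - p₂) (v₁ - v₂) d).isPreconnected
      hbdd.bddBelow hbdd.bddAbove
  simp only [hgap]
  exact ⟨a, b, hab, by rw [← hab, compl_ofPred]; simp only [not_lt]⟩
end
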